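/- Let D, D' be real d×d matrices with unit-norm columns. Then the squared Frobenius norm of D' - D - D·Λ(D,D') equals Σ_j (1 - ⟨D_j, D'_j⟩²), where Λ(D,D') is the diagonal matrix with j-th entry -½‖D_j - D'_j‖₂². Consequently ‖D' - D - D·Λ(D,D')‖_F ≤ ‖D' - D‖_F. -/

import Mathlib

/-!
Column by column, the `j`-th column of `D' - D - D Λ` is `D'ⱼ - cⱼ Dⱼ` with `cⱼ = ⟨Dⱼ, D'ⱼ⟩`, because
`1 - ½‖Dⱼ - D'ⱼ‖² = cⱼ` for unit vectors. For a unit vector `u`, completing the square gives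
`‖v - t u‖² = ‖v‖² - ⟨u, v⟩² + (t - ⟨u, v⟩)²`, so `D'ⱼ - cⱼ Dⱼ` has squared norm `1 - cⱼ²`, the minimum over
`t`, which is at most the value `‖D'ⱼ - Dⱼ‖²` at `t = 1`.
-/

open Matrix Finset

/-- Frobenius norm of a real matrix. -/
noncomputable def frob {d : ℕ} (X : Matrix (Fin d) (Fin d) ℝ) : ℝ :=
  Real.sqrt (∑ i, ∑ j, (X i j) ^ 2)

section UnitVector

variable {ι : Type*} [Fintype ι] {u : ι → ℝ} (v : ι → ℝ)

theorem sum_sub_mul_sq_of_sum_sq_eq_one (hu : ∑ i, u i ^ 2 = 1) (t : ℝ) :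
    ∑ i, (v i - t * u i) ^ 2
      = ∑ i, v i ^ 2 - (∑ i, u i * v i) ^ 2 + (t - ∑ i, u i * v i) ^ 2 := by
  have hexpand : ∑ i, (v i - t * u i) ^ 2
      = ∑ i, v i ^ 2 - 2 * t * ∑ i, u i * v i + t ^ 2 * ∑ i, u i ^ 2 := by
    simp only [mul_sum, ← sum_sub_distrib, ← sum_add_distrib]
    exact sum_congr rfl fun i _ => by ring
  rw [hexpand, hu]
  ring

theorem sum_sub_inner_mul_sq_le (hu : ∑ i, u i ^ 2 = 1) (t : ℝ) :
    ∑ i, (v i - (∑ k, u k * v k) * u i) ^ 2 ≤ ∑ i, (v i - t * u i) ^ 2 := by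
  rw [sum_sub_mul_sq_of_sum_sq_eq_one v hu, sum_sub_mul_sq_of_sum_sq_eq_one v hu]
  nlinarith [sq_nonneg (t - ∑ i, u i * v i)]

theorem one_sub_half_sum_sub_sq (hu : ∑ i, u i ^ 2 = 1) (hv : ∑ i, v i ^ 2 = 1) :
    1 + -(1 / 2) * ∑ i, (u i - v i) ^ 2 = ∑ i, u i * v i := by
  have h := sum_sub_mul_sq_of_sum_sq_eq_one v hu 1
  simp only [one_mul, hv] at h
  rw [show ∑ i, (u i - v i) ^ 2 = ∑ i, (v i - u i) ^ 2 from
    sum_congr rfl fun i _ => by ring, h]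
  ring

end UnitVector

theorem sub_sub_mul_diagonal_apply {d : ℕ} (A B : Matrix (Fin d) (Fin d) ℝ) (μ : Fin d → ℝ)
    (i j : Fin d) : (B - A - A * diagonal μ) i j = B i j - (1 + μ j) * A i j := by
  simp only [Matrix.sub_apply, mul_diagonal]
  ring

theorem frob_sq {d : ℕ} (X : Matrix (Fin d) (Fin d) ℝ) :
    frob X ^ 2 = ∑ j, ∑ i, X i j ^ 2 := by
  rw [frob, Real.sq_sqrt (by positivity), sum_comm]

theorem frob_le_frob_of_forall_col {d : ℕ} {X Y : Matrix (Fin d) (Fin d) ℝ}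
    (h : ∀ j, ∑ i, X i j ^ 2 ≤ ∑ i, Y i j ^ 2) : frob X ≤ frob Y := by
  rw [frob, frob, sum_comm, sum_comm (f := fun i j => Y i j ^ 2)]
  exact Real.sqrt_le_sqrt (sum_le_sum fun j _ => h j)

theorem stmt4 (d : ℕ) (D D' : Matrix (Fin d) (Fin d) ℝ)
    (hD : ∀ j, ∑ i, (D i j) ^ 2 = 1) (hD' : ∀ j, ∑ i, (D' i j) ^ 2 = 1)
    (Λ : Matrix (Fin d) (Fin d) ℝ)
    (hΛ : Λ = Matrix.diagonal (fun j => -(1 / 2) * ∑ i, (D i j - D' i j) ^ 2)) :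
    frob (D' - D - D * Λ) ^ 2 = ∑ j, (1 - (∑ i, D i j * D' i j) ^ 2) ∧
    frob (D' - D - D * Λ) ≤ frob (D' - D) := by
  have hcol : ∀ i j, (D' - D - D * Λ) i j = D' i j - (∑ k, D k j * D' k j) * D i j := by
    intro i j
    rw [hΛ, sub_sub_mul_diagonal_apply, one_sub_half_sum_sub_sq _ (hD j) (hD' j)]
  refine ⟨?_, frob_le_frob_of_forall_col fun j => ?_⟩
  · rw [frob_sq]
    refine sum_congr rfl fun j _ => ?_
    simp only [hcol, sum_sub_mul_sq_of_sum_sq_eq_one _ (hD j), hD', sub_self]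
    ring
  · simpa only [hcol, Matrix.sub_apply, one_mul] using
      sum_sub_inner_mul_sq_le (fun i => D' i j) (hD j) 1
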